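/- arXiv:1304.4661 — 2 statements merged into one kernel-verified Lean document; each statement's English description precedes it below -/
import Mathlib

section
/- The pruned landmark labeling index L'_n is minimal: for every vertex v and every pair (u, δ_uv) ∈ L'_n(v), if L'' denotes the label assignment obtained from L'_n by removing the single pair (u, δ_uv) from L'_n(v) (leaving all other labels unchanged), then Query(v, u, L'') > d_G(v, u); in particular there is a pair of vertices (namely (v, u) itself) whose correct distance can no longer be answered from the labels. -/
open SimpleGraph

/-- The 2-hop query value computed from a label assignment `L`:
the minimum of `d₁ + d₂` over common label vertices, `∞` if none. -/
noncomputable def Query {V : Type*} (L : V → Set (V × ℕ∞)) (s t : V) : ℕ∞ :=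
  sInf {x : ℕ∞ | ∃ w d₁ d₂, (w, d₁) ∈ L s ∧ (w, d₂) ∈ L t ∧ x = d₁ + d₂}

/- The naive landmark labels `L_k`. -/
open Classical in
noncomputable def naiveL {V : Type*} (G : SimpleGraph V) (ord : ℕ → V) :
    ℕ → V → Set (V × ℕ∞)
  | 0 => fun _ => ∅
  | (k + 1) => fun u =>
      if G.edist (ord (k + 1)) u < ⊤ then
        naiveL G ord k u ∪ {(ord (k + 1), G.edist (ord (k + 1)) u)}
      else naiveL G ord k u

/- The pruned landmark labels `L'_k`. -/
open Classical in
noncomputable def prunedL {V : Type*} (G : SimpleGraph V) (ord : ℕ → V) :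
    ℕ → V → Set (V × ℕ∞)
  | 0 => fun _ => ∅
  | (k + 1) => fun u =>
      if G.edist (ord (k + 1)) u < ⊤ ∧
          G.edist (ord (k + 1)) u < Query (prunedL G ord k) (ord (k + 1)) u then
        prunedL G ord k u ∪ {(ord (k + 1), G.edist (ord (k + 1)) u)}
      else prunedL G ord k u

/-- `P_G(s,t)`: the set of vertices on shortest paths between `s` and `t`. -/
def PG {V : Type*} (G : SimpleGraph V) (s t : V) : Set V :=
  {w | G.edist s w + G.edist w t = G.edist s t}
section Aux

variable {V : Type*} {G : SimpleGraph V} {ord : ℕ → V}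

lemma Query_le_of_mem {L : V → Set (V × ℕ∞)} {s t w : V} {d₁ d₂ : ℕ∞}
    (h1 : (w, d₁) ∈ L s) (h2 : (w, d₂) ∈ L t) : Query L s t ≤ d₁ + d₂ :=
  sInf_le ⟨w, d₁, d₂, h1, h2, rfl⟩

lemma exists_of_Query_le {L : V → Set (V × ℕ∞)} {s t : V} {c : ℕ∞}
    (h : Query L s t ≤ c) (hc : c < ⊤) :
    ∃ w d₁ d₂, (w, d₁) ∈ L s ∧ (w, d₂) ∈ L t ∧ d₁ + d₂ ≤ c := by
  set S := {x : ℕ∞ | ∃ w d₁ d₂, (w, d₁) ∈ L s ∧ (w, d₂) ∈ L t ∧ x = d₁ + d₂} with hS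
  have hne : S.Nonempty := by
    by_contra hemp
    rw [Set.not_nonempty_iff_eq_empty] at hemp
    have : Query L s t = ⊤ := by
      rw [Query, ← hS, hemp, sInf_empty]
    exact absurd (this ▸ h) (not_le.mpr hc)
  have hmem : sInf S ∈ S := csInf_mem hne
  obtain ⟨w, d₁, d₂, h1, h2, hx⟩ := hmem
  exact ⟨w, d₁, d₂, h1, h2, hx ▸ h⟩

lemma prunedL_mono_succ (k : ℕ) (x : V) :
    prunedL G ord k x ⊆ prunedL G ord (k + 1) x := by
  intro p hp
  simp only [prunedL]
  split_ifs with hc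
  · exact Or.inl hp
  · exact hp

lemma prunedL_mono {k m : ℕ} (h : k ≤ m) (x : V) :
    prunedL G ord k x ⊆ prunedL G ord m x := by
  induction m with
  | zero => obtain rfl : k = 0 := Nat.le_zero.mp h; exact subset_rfl
  | succ m ih =>
    rcases Nat.eq_or_lt_of_le h with h' | h'
    · exact h' ▸ subset_rfl
    · exact (ih (Nat.lt_succ_iff.mp h')).trans (prunedL_mono_succ m x)

lemma mem_prunedL {k : ℕ} {x w : V} {d : ℕ∞} (h : (w, d) ∈ prunedL G ord k x) :
    ∃ i, 1 ≤ i ∧ i ≤ k ∧ ord i = w ∧ d = G.edist w x ∧ G.edist w x < ⊤ ∧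
      G.edist w x < Query (prunedL G ord (i - 1)) w x := by
  induction k with
  | zero => simp [prunedL] at h
  | succ k ih =>
    simp only [prunedL] at h
    split_ifs at h with hc
    · rcases h with h | h
      · obtain ⟨i, h1, h2, rest⟩ := ih h
        exact ⟨i, h1, h2.trans (Nat.le_succ k), rest⟩
      · rw [Set.mem_singleton_iff, Prod.mk.injEq] at h
        obtain ⟨hw, hd⟩ := h
        subst hw
        refine ⟨k + 1, Nat.one_le_iff_ne_zero.mpr (Nat.succ_ne_zero k), le_rfl, rfl,
          hd, hc.1, by simpa using hc.2⟩
    · obtain ⟨i, h1, h2, rest⟩ := ih h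
      exact ⟨i, h1, h2.trans (Nat.le_succ k), rest⟩

lemma PG_comm {s t w : V} (h : w ∈ PG G s t) : w ∈ PG G t s := by
  simp only [PG, Set.mem_setOf_eq] at h ⊢
  rw [G.edist_comm (u := t) (v := w), G.edist_comm (u := w) (v := s),
    G.edist_comm (u := t) (v := s), add_comm]
  exact h

/-- If `i` is a minimal-index vertex on a shortest `s`–`t` path, then the pruned BFS
from `ord i` adds its label to `s`. -/
lemma hub_side {s t : V} (hst : G.edist s t < ⊤) {i : ℕ} (hi1 : 1 ≤ i)
    (hiP : ord i ∈ PG G s t)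
    (hmin : ∀ i', 1 ≤ i' → i' < i → ord i' ∉ PG G s t) :
    (ord i, G.edist (ord i) s) ∈ prunedL G ord i s := by
  obtain ⟨m, rfl⟩ := Nat.exists_eq_add_of_le hi1
  have hiP' : G.edist s (ord (1 + m)) + G.edist (ord (1 + m)) t = G.edist s t := hiP
  have hfin : G.edist (ord (1 + m)) s < ⊤ := by
    rw [G.edist_comm]
    exact lt_of_le_of_lt (le_self_add.trans hiP'.le) hst
  have hq : G.edist (ord (1 + m)) s < Query (prunedL G ord m) (ord (1 + m)) s := by
    by_contra hq
    push_neg at hq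
    obtain ⟨w', a, b, ha, hb, hab⟩ := exists_of_Query_le hq hfin
    obtain ⟨i', hi'1, hi'm, hordi', hda, _, _⟩ := mem_prunedL ha
    obtain ⟨_, _, _, _, hdb, _, _⟩ := mem_prunedL hb
    -- `w'` lies on a shortest path from `s` to `ord (1+m)`
    have e1 : G.edist s w' + G.edist w' (ord (1 + m)) = G.edist s (ord (1 + m)) := by
      refine le_antisymm ?_ (G.edist_triangle)
      calc G.edist s w' + G.edist w' (ord (1 + m))
          = b + a := by rw [G.edist_comm (u := s) (v := w'), ← hdb, ← hda]
        _ ≤ G.edist (ord (1 + m)) s := by rw [add_comm]; exact hab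
        _ = G.edist s (ord (1 + m)) := G.edist_comm
    have hw'P : w' ∈ PG G s t := by
      refine le_antisymm ?_ (G.edist_triangle)
      calc G.edist s w' + G.edist w' t
          ≤ G.edist s w' + (G.edist w' (ord (1 + m)) + G.edist (ord (1 + m)) t) := by
            exact add_le_add le_rfl G.edist_triangle
        _ = (G.edist s w' + G.edist w' (ord (1 + m))) + G.edist (ord (1 + m)) t := by
            rw [add_assoc]
        _ = G.edist s (ord (1 + m)) + G.edist (ord (1 + m)) t := by rw [e1]
        _ = G.edist s t := hiP'
    exact hmin i' hi'1 (by omega) (hordi' ▸ hw'P)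
  have h1m : 1 + m = m + 1 := by omega
  rw [h1m] at hq hfin ⊢
  simp only [prunedL]
  rw [if_pos ⟨hfin, hq⟩]
  exact Or.inr rfl

/-- Existence of a minimal-index hub whose label is stored at both endpoints. -/
lemma hub {n : ℕ} (hsurj : ∀ u : V, ∃ i ∈ Finset.Icc 1 n, ord i = u)
    {s t : V} (hst : G.edist s t < ⊤) :
    ∃ i, 1 ≤ i ∧ i ≤ n ∧ ord i ∈ PG G s t ∧
      (∀ i', 1 ≤ i' → i' ≤ n → ord i' ∈ PG G s t → i ≤ i') ∧
      (ord i, G.edist (ord i) s) ∈ prunedL G ord i s ∧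
      (ord i, G.edist (ord i) t) ∈ prunedL G ord i t := by
  classical
  have hsP : s ∈ PG G s t := by
    simp [PG, G.edist_self]
  obtain ⟨i₀, hi₀, hords⟩ := hsurj s
  rw [Finset.mem_Icc] at hi₀
  set S : Finset ℕ := (Finset.Icc 1 n).filter (fun i => ord i ∈ PG G s t) with hSdef
  have hSne : S.Nonempty := ⟨i₀, by
    rw [hSdef, Finset.mem_filter, Finset.mem_Icc]
    exact ⟨⟨hi₀.1, hi₀.2⟩, by rw [hords]; exact hsP⟩⟩
  set i := S.min' hSne with hidef
  have hiS : i ∈ S := S.min'_mem hSne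
  rw [hSdef, Finset.mem_filter, Finset.mem_Icc] at hiS
  have hmin : ∀ i', 1 ≤ i' → i' ≤ n → ord i' ∈ PG G s t → i ≤ i' := by
    intro i' h1 h2 h3
    exact S.min'_le i' (by simp [hSdef, Finset.mem_filter, Finset.mem_Icc, h1, h2, h3])
  have hmin' : ∀ i', 1 ≤ i' → i' < i → ord i' ∉ PG G s t := by
    intro i' h1 h2 h3
    exact absurd (hmin i' h1 (by omega) h3) (by omega)
  have hs1 : (ord i, G.edist (ord i) s) ∈ prunedL G ord i s :=
    hub_side hst hiS.1.1 hiS.2 hmin'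
  have hst' : G.edist t s < ⊤ := by rwa [G.edist_comm] at hst
  have hs2 : (ord i, G.edist (ord i) t) ∈ prunedL G ord i t :=
    hub_side hst' hiS.1.1 (PG_comm hiS.2) (fun i' h1 h2 h3 => hmin' i' h1 h2 (PG_comm h3))
  exact ⟨i, hiS.1.1, hiS.1.2, hiS.2, hmin, hs1, hs2⟩

end Aux

/-- Minimality of the pruned landmark labeling index: removing any single pair
`(u, δ)` from the label `L'_n(v)` makes the query for the pair `(v, u)` wrong
(the query value becomes strictly larger than the true distance). -/
theorem prunedL_minimal {V : Type*} [Fintype V] [DecidableEq V] (G : SimpleGraph V)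
    (n : ℕ) (ord : ℕ → V)
    (hinj : ∀ i ∈ Finset.Icc 1 n, ∀ j ∈ Finset.Icc 1 n, ord i = ord j → i = j)
    (hsurj : ∀ u : V, ∃ i ∈ Finset.Icc 1 n, ord i = u)
    (v u : V) (δ : ℕ∞) (hmem : (u, δ) ∈ prunedL G ord n v) :
    G.edist v u <
      Query (fun y => if y = v then prunedL G ord n v \ {(u, δ)} else prunedL G ord n y)
        v u := by
  obtain ⟨j, hj1, hjn, hordj, hδ, hfin, hq⟩ := mem_prunedL hmem
  -- `j` is the step at which `(u, δ)` was added; `δ = edist u v`.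
  have claim : ∀ i', 1 ≤ i' → i' ≤ n → ord i' ∈ PG G u v → j ≤ i' := by
    intro i' h1 h2 h3
    by_contra hlt
    push_neg at hlt
    obtain ⟨i₂, hi₂1, hi₂n, hi₂P, hi₂min, hp1, hp2⟩ := hub (G := G) (ord := ord) hsurj hfin
    have hi₂i' : i₂ ≤ i' := hi₂min i' h1 h2 h3
    have hle : Query (prunedL G ord (j - 1)) u v ≤
        G.edist (ord i₂) u + G.edist (ord i₂) v :=
      Query_le_of_mem (prunedL_mono (show i₂ ≤ j - 1 by omega) u hp1)
        (prunedL_mono (show i₂ ≤ j - 1 by omega) v hp2)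
    have hle2 : Query (prunedL G ord (j - 1)) u v ≤ G.edist u v := by
      refine hle.trans_eq ?_
      rw [G.edist_comm (u := ord i₂) (v := u)]
      exact hi₂P
    exact absurd hq (not_lt.mpr hle2)
  by_contra hcon
  push_neg at hcon
  have hvu : G.edist v u < ⊤ := by rwa [G.edist_comm] at hfin
  obtain ⟨w, d₁, d₂, h1, h2, h12⟩ := exists_of_Query_le hcon hvu
  simp only at h1 h2
  rw [if_true] at h1
  have h2' : (w, d₂) ∈ prunedL G ord n u := by
    by_cases huv : u = v
    · rw [if_pos huv] at h2
      rw [huv]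
      exact h2.1
    · rwa [if_neg huv] at h2
  obtain ⟨i, hi1, hin, hordi, hd₁, _, _⟩ := mem_prunedL h1.1
  obtain ⟨i₂, hi₂1, hi₂n, hordi₂, hd₂, hwufin, hqwu⟩ := mem_prunedL h2'
  have hii : i₂ = i := hinj i₂ (Finset.mem_Icc.mpr ⟨hi₂1, hi₂n⟩) i
    (Finset.mem_Icc.mpr ⟨hi1, hin⟩) (hordi₂.trans hordi.symm)
  subst hii
  have heq : d₁ + d₂ = G.edist v u := by
    refine le_antisymm h12 ?_
    rw [hd₁, hd₂, G.edist_comm (u := w) (v := v)]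
    exact G.edist_triangle
  have hwP : G.edist u w + G.edist w v = G.edist u v := by
    calc G.edist u w + G.edist w v = d₂ + d₁ := by
          rw [G.edist_comm (u := u) (v := w), ← hd₂, ← hd₁]
      _ = d₁ + d₂ := add_comm _ _
      _ = G.edist v u := heq
      _ = G.edist u v := G.edist_comm
  have hwPmem : w ∈ PG G u v := hwP
  have hji : j ≤ i₂ := claim i₂ hi1 hin (by
    show ord i₂ ∈ PG G u v
    rw [hordi]
    exact hwPmem)
  rcases Nat.eq_or_lt_of_le hji with hji' | hji'
  · -- then `w = u` and `(w, d₁) = (u, δ)`, which was removed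
    have hw : w = u := by rw [← hordi, ← hji', hordj]
    have hdδ : d₁ = δ := by rw [hd₁, hw, hδ]
    exact h1.2 (by rw [hw, hdδ]; rfl)
  · -- `j < i₂`: the addition of `(w, d₂)` to `L(u)` at step `i₂` was pruned, contradiction
    obtain ⟨i₃, hi₃1, hi₃n, hi₃P, hi₃min, hp1, hp2⟩ :=
      hub (G := G) (ord := ord) hsurj hwufin
    have huPwu : u ∈ PG G w u := by simp [PG, G.edist_self]
    have hi₃j : i₃ ≤ j := hi₃min j hj1 hjn (by show ord j ∈ PG G w u; rw [hordj]; exact huPwu)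
    have hPsub : ord i₃ ∈ PG G u v := by
      have h3 : G.edist w (ord i₃) + G.edist (ord i₃) u = G.edist w u := hi₃P
      show G.edist u (ord i₃) + G.edist (ord i₃) v = G.edist u v
      refine le_antisymm ?_ G.edist_triangle
      calc G.edist u (ord i₃) + G.edist (ord i₃) v
          ≤ G.edist u (ord i₃) + (G.edist (ord i₃) w + G.edist w v) :=
            add_le_add le_rfl G.edist_triangle
        _ = (G.edist w (ord i₃) + G.edist (ord i₃) u) + G.edist w v := by
            rw [G.edist_comm (u := w) (v := ord i₃), G.edist_comm (u := u) (v := ord i₃)]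
            ring
        _ = G.edist w u + G.edist w v := by rw [h3]
        _ = G.edist u w + G.edist w v := by rw [G.edist_comm (u := w) (v := u)]
        _ = G.edist u v := hwP
    have hji₃ : j ≤ i₃ := claim i₃ hi₃1 hi₃n hPsub
    have hi₃eq : i₃ = j := le_antisymm hi₃j hji₃
    have hc : Query (prunedL G ord (i₂ - 1)) w u ≤
        G.edist (ord i₃) w + G.edist (ord i₃) u :=
      Query_le_of_mem (prunedL_mono (show i₃ ≤ i₂ - 1 by omega) w hp1)
        (prunedL_mono (show i₃ ≤ i₂ - 1 by omega) u hp2)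
    have hval : G.edist (ord i₃) w + G.edist (ord i₃) u = G.edist w u := by
      rw [hi₃eq, hordj, G.edist_self, add_zero, G.edist_comm]
    exact absurd hqwu (not_lt.mpr (hc.trans_eq hval))
end

section
/- Separator pruning (key claim for the tree-width bound): let 1 < j ≤ n and let u be a vertex such that every walk in G from v_j to u contains some vertex v_i with i < j. Then no pair with first component v_j is ever added to the label of u, i.e., (v_j, δ) ∉ L'_k(u) for every δ and every 0 ≤ k ≤ n; in other words, once pruned BFSs have been conducted from all vertices of a separator, later pruned BFSs never go beyond the separator. -/
open SimpleGraph

lemma query_le {V : Type*} (L : V → Set (V × ℕ∞)) {s t w : V} {d₁ d₂ : ℕ∞}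
    (h1 : (w, d₁) ∈ L s) (h2 : (w, d₂) ∈ L t) : Query L s t ≤ d₁ + d₂ :=
  sInf_le ⟨w, d₁, d₂, h1, h2, rfl⟩

lemma mem_prunedL_s9 {V : Type*} (G : SimpleGraph V) (ord : ℕ → V) :
    ∀ k u w δ, (w, δ) ∈ prunedL G ord k u →
      ∃ m, 1 ≤ m ∧ m ≤ k ∧ w = ord m ∧ δ = G.edist w u ∧ G.edist w u < ⊤ := by
  intro k
  induction k with
  | zero => intro u w δ h; simp [prunedL] at h
  | succ k ih =>
    intro u w δ h
    simp only [prunedL] at h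
    split_ifs at h with hc
    · rcases h with h | h
      · obtain ⟨m, h1, h2, h3, h4, h5⟩ := ih u w δ h
        exact ⟨m, h1, h2.trans (Nat.le_succ k), h3, h4, h5⟩
      · simp only [Set.mem_singleton_iff, Prod.mk.injEq] at h
        obtain ⟨hw, hδ⟩ := h
        exact ⟨k+1, Nat.succ_le_succ (Nat.zero_le k), le_refl _, hw,
          by rw [hw]; exact hδ, by rw [hw]; exact hc.1⟩
    · obtain ⟨m, h1, h2, h3, h4, h5⟩ := ih u w δ h
      exact ⟨m, h1, h2.trans (Nat.le_succ k), h3, h4, h5⟩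

lemma prunedL_mono_s9 {V : Type*} (G : SimpleGraph V) (ord : ℕ → V) :
    ∀ k k', k ≤ k' → ∀ u, prunedL G ord k u ⊆ prunedL G ord k' u := by
  intro k k' hkk'
  induction k' with
  | zero => intro u; rw [Nat.le_zero.mp hkk']
  | succ k' ih =>
    intro u
    rcases Nat.lt_or_ge k (k'+1) with h | h
    · have hsub := ih (Nat.lt_succ_iff.mp h) u
      intro x hx
      simp only [prunedL]
      split_ifs with hc
      · exact Or.inl (hsub hx)
      · exact hsub hx
    · rw [Nat.le_antisymm hkk' h]

/-- Extract a pruning witness: if the pruning condition failed at step `m+1` for `x`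
(although `ord (m+1)` is reachable from `x`), then there is an earlier landmark `ord h`
in both labels with total distance at most `edist (ord (m+1)) x`. -/
lemma extract_witness {V : Type*} (G : SimpleGraph V) (ord : ℕ → V) (m : ℕ) (x : V)
    (hq : Query (prunedL G ord m) (ord (m+1)) x ≤ G.edist (ord (m+1)) x)
    (hfin : G.edist (ord (m+1)) x < ⊤) :
    ∃ h, 1 ≤ h ∧ h ≤ m ∧ G.edist (ord h) (ord (m+1)) < ⊤ ∧ G.edist (ord h) x < ⊤ ∧
      (ord h, G.edist (ord h) (ord (m+1))) ∈ prunedL G ord m (ord (m+1)) ∧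
      (ord h, G.edist (ord h) x) ∈ prunedL G ord m x ∧
      G.edist (ord h) (ord (m+1)) + G.edist (ord h) x ≤ G.edist (ord (m+1)) x := by
  set S := {y : ℕ∞ | ∃ w d₁ d₂, (w, d₁) ∈ prunedL G ord m (ord (m+1)) ∧
      (w, d₂) ∈ prunedL G ord m x ∧ y = d₁ + d₂} with hS
  have hne : S.Nonempty := by
    rw [Set.nonempty_iff_ne_empty]
    intro hemp
    have : Query (prunedL G ord m) (ord (m+1)) x = ⊤ := by
      simp only [Query, ← hS, hemp, sInf_empty]
    rw [this] at hq
    exact absurd (top_le_iff.mp hq) hfin.ne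
  have hmem : sInf S ∈ S := csInf_mem hne
  obtain ⟨w, d₁, d₂, hw1, hw2, heq⟩ := hmem
  obtain ⟨h, hh1, hhm, hwh, hd₁, hfin1⟩ := mem_prunedL_s9 G ord m (ord (m+1)) w d₁ hw1
  obtain ⟨h', _, _, hwh', hd₂, hfin2⟩ := mem_prunedL_s9 G ord m x w d₂ hw2
  subst hwh
  refine ⟨h, hh1, hhm, hfin1, hfin2, ?_, ?_, ?_⟩
  · rwa [← hd₁]
  · rwa [← hd₂]
  · calc G.edist (ord h) (ord (m+1)) + G.edist (ord h) x = d₁ + d₂ := by rw [hd₁, hd₂]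
    _ = sInf S := heq.symm
    _ ≤ G.edist (ord (m+1)) x := hq

lemma query_le_key {V : Type*} (G : SimpleGraph V) (ord : ℕ → V) :
    ∀ i, 1 ≤ i → ∀ k, i ≤ k → ∀ s t : V, G.edist (ord i) s < ⊤ → G.edist (ord i) t < ⊤ →
      Query (prunedL G ord k) s t ≤ G.edist (ord i) s + G.edist (ord i) t := by
  intro i
  induction i using Nat.strong_induction_on with
  | _ i IH =>
    intro hi1 k hik s t hs ht
    obtain ⟨m, rfl⟩ : ∃ m, i = m + 1 := ⟨i - 1, (Nat.succ_pred_eq_of_pos hi1).symm⟩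
    by_cases hcs : G.edist (ord (m+1)) s < Query (prunedL G ord m) (ord (m+1)) s
    · by_cases hct : G.edist (ord (m+1)) t < Query (prunedL G ord m) (ord (m+1)) t
      · -- ord (m+1) is added to both labels at step m+1
        have hms : (ord (m+1), G.edist (ord (m+1)) s) ∈ prunedL G ord (m+1) s := by
          simp only [prunedL]; rw [if_pos ⟨hs, hcs⟩]; exact Or.inr rfl
        have hmt : (ord (m+1), G.edist (ord (m+1)) t) ∈ prunedL G ord (m+1) t := by
          simp only [prunedL]; rw [if_pos ⟨ht, hct⟩]; exact Or.inr rfl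
        exact query_le _ (prunedL_mono_s9 G ord (m+1) k hik s hms)
          (prunedL_mono_s9 G ord (m+1) k hik t hmt)
      · -- pruned from t's label
        obtain ⟨h, hh1, hhm, hf1, hf2, hm1, hm2, hle⟩ :=
          extract_witness G ord m t (not_lt.mp hct) ht
        have hfs : G.edist (ord h) s < ⊤ :=
          lt_of_le_of_lt (G.edist_triangle (v := ord (m+1)))
            (by exact ENat.add_lt_top.mpr ⟨hf1, hs⟩)
        have := IH h (Nat.lt_succ_of_le hhm) hh1 k (le_trans (hhm.trans (Nat.le_succ m)) hik) s t hfs hf2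
        refine le_trans this ?_
        calc G.edist (ord h) s + G.edist (ord h) t
            ≤ (G.edist (ord h) (ord (m+1)) + G.edist (ord (m+1)) s) + G.edist (ord h) t :=
              add_le_add_left (G.edist_triangle (v := ord (m+1))) _
          _ = G.edist (ord (m+1)) s + (G.edist (ord h) (ord (m+1)) + G.edist (ord h) t) := by
              ring
          _ ≤ G.edist (ord (m+1)) s + G.edist (ord (m+1)) t := add_le_add_right hle _
    · -- pruned from s's label
      obtain ⟨h, hh1, hhm, hf1, hf2, hm1, hm2, hle⟩ :=
        extract_witness G ord m s (not_lt.mp hcs) hs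
      have hft : G.edist (ord h) t < ⊤ :=
        lt_of_le_of_lt (G.edist_triangle (v := ord (m+1)))
          (by exact ENat.add_lt_top.mpr ⟨hf1, ht⟩)
      have := IH h (Nat.lt_succ_of_le hhm) hh1 k (le_trans (hhm.trans (Nat.le_succ m)) hik) s t hf2 hft
      refine le_trans this ?_
      calc G.edist (ord h) s + G.edist (ord h) t
          ≤ G.edist (ord h) s + (G.edist (ord h) (ord (m+1)) + G.edist (ord (m+1)) t) :=
            add_le_add_right (G.edist_triangle (v := ord (m+1))) _
        _ = (G.edist (ord h) (ord (m+1)) + G.edist (ord h) s) + G.edist (ord (m+1)) t := by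
            ring
        _ ≤ G.edist (ord (m+1)) s + G.edist (ord (m+1)) t := add_le_add_left hle _

/-- Separator pruning (key claim for the tree-width bound): if `1 < j ≤ n` and every
walk in `G` from `v_j` to `u` contains some vertex `v_i` with `i < j`, then no pair with
first component `v_j` is ever added to the label of `u`. -/
theorem prunedL_separator {V : Type*} [Fintype V] (G : SimpleGraph V)
    (n : ℕ) (ord : ℕ → V)
    (hinj : ∀ i ∈ Finset.Icc 1 n, ∀ j ∈ Finset.Icc 1 n, ord i = ord j → i = j)
    (hsurj : ∀ u : V, ∃ i ∈ Finset.Icc 1 n, ord i = u)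
    (j : ℕ) (hj1 : 1 < j) (hjn : j ≤ n) (u : V)
    (hsep : ∀ w : G.Walk (ord j) u, ∃ i, 1 ≤ i ∧ i < j ∧ ord i ∈ w.support) :
    ∀ δ : ℕ∞, ∀ k ≤ n, (ord j, δ) ∉ prunedL G ord k u := by
  classical
  intro δ k
  induction k with
  | zero => intro _ h; simp [prunedL] at h
  | succ k ih =>
    intro hk hmem
    have hkn : k ≤ n := le_trans (Nat.le_succ k) hk
    simp only [prunedL] at hmem
    split_ifs at hmem with hc
    · rcases hmem with hmem | hmem
      · exact ih hkn hmem
      · simp only [Set.mem_singleton_iff, Prod.mk.injEq] at hmem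
        obtain ⟨hje, hδ⟩ := hmem
        have hj : j = k + 1 := hinj j (Finset.mem_Icc.mpr ⟨hj1.le, hjn⟩) (k+1)
          (Finset.mem_Icc.mpr ⟨Nat.succ_le_succ (Nat.zero_le k), hk⟩) hje
        subst hj
        obtain ⟨p, hp⟩ := exists_walk_of_edist_ne_top hc.1.ne
        obtain ⟨i, hi1, hij, his⟩ := hsep p
        have h1 : G.edist (ord (k+1)) (ord i) ≤ (p.takeUntil (ord i) his).length :=
          edist_le _
        have h2 : G.edist (ord i) u ≤ (p.dropUntil (ord i) his).length :=
          edist_le _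
        have hsplit : (p.takeUntil (ord i) his).length + (p.dropUntil (ord i) his).length
            = p.length := by
          rw [← Walk.length_append, Walk.take_spec]
        have hf1 : G.edist (ord i) (ord (k+1)) < ⊤ := by
          rw [SimpleGraph.edist_comm]; exact lt_of_le_of_lt h1 (WithTop.coe_lt_top _)
        have hf2 : G.edist (ord i) u < ⊤ := lt_of_le_of_lt h2 (WithTop.coe_lt_top _)
        have hsum : G.edist (ord i) (ord (k+1)) + G.edist (ord i) u
            ≤ G.edist (ord (k+1)) u := by
          rw [SimpleGraph.edist_comm (u := ord i) (v := ord (k+1))]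
          calc G.edist (ord (k+1)) (ord i) + G.edist (ord i) u
              ≤ ((p.takeUntil (ord i) his).length : ℕ∞)
                + ((p.dropUntil (ord i) his).length : ℕ∞) := add_le_add h1 h2
            _ = (p.length : ℕ∞) := by rw [← hsplit]; push_cast; ring
            _ = G.edist (ord (k+1)) u := hp
        have hkey := query_le_key G ord i hi1 k (Nat.lt_succ_iff.mp hij) (ord (k+1)) u hf1 hf2
        exact absurd hc.2 (not_lt.mpr (hkey.trans hsum))
    · exact ih hkn hmem
end
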